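/- Let ρ and σ be positive definite d×d density matrices, let λ_ρ be the largest eigenvalue of ρ, let α_ρ and α_σ be the smallest eigenvalues of ρ and σ respectively, and assume α_ρ ≠ α_σ. Then the Umegaki relative entropy satisfies S(ρ‖σ) ≤ ‖ρ−σ‖₁ · λ_ρ · (log α_ρ − log α_σ)/(α_ρ − α_σ). -/

import Mathlib

open Matrix ComplexOrder

/-- The trace norm of a complex matrix: the sum of its singular values,
realized as `Tr √(Aᴴ A)`. -/
noncomputable def traceNorm {d : ℕ} (A : Matrix (Fin d) (Fin d) ℂ) : ℝ :=
  ((((Matrix.posSemidef_conjTranspose_mul_self A).1.eigenvectorUnitary : Matrix (Fin d) (Fin d) ℂ) *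
      Matrix.diagonal (fun i => ((Real.sqrt ((Matrix.posSemidef_conjTranspose_mul_self A).1.eigenvalues i) : ℝ) : ℂ)) *
      (star (Matrix.posSemidef_conjTranspose_mul_self A).1.eigenvectorUnitary :
        Matrix (Fin d) (Fin d) ℂ)).trace).re

/-- Functional calculus for a Hermitian matrix: apply `f` to the eigenvalues in an
orthonormal eigenbasis. -/
noncomputable def matFun {d : ℕ} {A : Matrix (Fin d) (Fin d) ℂ} (hA : A.IsHermitian)
    (f : ℝ → ℝ) : Matrix (Fin d) (Fin d) ℂ :=
  (hA.eigenvectorUnitary : Matrix (Fin d) (Fin d) ℂ) *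
    Matrix.diagonal (fun i => (f (hA.eigenvalues i) : ℂ)) *
    (star hA.eigenvectorUnitary : Matrix (Fin d) (Fin d) ℂ)

/-- `f : (0,∞) → ℝ` is operator monotone decreasing: for all positive definite matrices
`A ≤ B` (Loewner order) of any size, `f(B) ≤ f(A)`. -/
def OpMonoDecrOn (f : ℝ → ℝ) : Prop :=
  ∀ (n : ℕ) (A B : Matrix (Fin n) (Fin n) ℂ) (hA : A.PosDef) (hB : B.PosDef),
    (B - A).PosSemidef → (matFun hA.1 f - matFun hB.1 f).PosSemidef

/-- The quasi-relative entropy `S_f(ρ‖σ) = Σ_{j,k} λ_j f(μ_k/λ_j) |⟨φ_k|ψ_j⟩|²` computed from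
spectral decompositions `ρ = Σ_j λ_j |ψ_j⟩⟨ψ_j|`, `σ = Σ_k μ_k |φ_k⟩⟨φ_k|`. -/
noncomputable def quasiRelEntropy {d : ℕ} (f : ℝ → ℝ) {ρ σ : Matrix (Fin d) (Fin d) ℂ}
    (hρ : ρ.IsHermitian) (hσ : σ.IsHermitian) : ℝ :=
  ∑ j, ∑ k, hρ.eigenvalues j * f (hσ.eigenvalues k / hρ.eigenvalues j) *
    ‖(inner ℂ (hσ.eigenvectorBasis k) (hρ.eigenvectorBasis j) : ℂ)‖ ^ 2

/-- The Umegaki relative entropy `S(ρ‖σ) = Tr(ρ (log ρ − log σ))`. -/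
noncomputable def relEntropy {d : ℕ} {ρ σ : Matrix (Fin d) (Fin d) ℂ}
    (hρ : ρ.IsHermitian) (hσ : σ.IsHermitian) : ℝ :=
  ((ρ * (matFun hρ Real.log - matFun hσ Real.log)).trace).re

/-- The Tsallis relative q-entropy `S_q(ρ‖σ) = (1/(1−q))(1 − Tr(ρ^q σ^{1−q}))`. -/
noncomputable def tsallisEntropy {d : ℕ} (q : ℝ) {ρ σ : Matrix (Fin d) (Fin d) ℂ}
    (hρ : ρ.IsHermitian) (hσ : σ.IsHermitian) : ℝ :=
  (1 / (1 - q)) *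
    (1 - ((matFun hρ (fun x => x ^ q) * matFun hσ (fun x => x ^ (1 - q))).trace).re)

/-!
Both logarithms are integrals of resolvents, `log a - log b = ∫₀^∞ ((b + s)⁻¹ - (a + s)⁻¹) ds`.
Inserting this into the two spectral decompositions gives
`S(ρ‖σ) = ∫₀^∞ Tr ρ ((σ + s)⁻¹ - (ρ + s)⁻¹) ds`. By the resolvent identity the integrand equals
`Tr ((ρ - σ) (ρ + s)⁻¹ ρ (σ + s)⁻¹)`, which Hölder's inequality for the trace norm against the
operator norm bounds by `‖ρ - σ‖₁ · λ_ρ / (α_ρ + s) · 1 / (α_σ + s)`. Integrating this bound by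
partial fractions gives the claim.
-/

open MeasureTheory Set Filter Topology Real
open scoped Matrix.Norms.L2Operator InnerProductSpace

namespace Real

lemma tendsto_log_add_sub_log_add (a b : ℝ) :
    Tendsto (fun s => log (b + s) - log (a + s)) atTop (𝓝 0) := by
  have h := (tendsto_log_comp_add_sub_log b).sub (tendsto_log_comp_add_sub_log a)
  rw [sub_zero] at h
  refine h.congr fun s => ?_
  simp only [add_comm s]
  ring

lemma hasDerivAt_log_add_sub_log_add {a b s : ℝ} (ha : 0 < a + s) (hb : 0 < b + s) :
    HasDerivAt (fun s => log (b + s) - log (a + s)) ((b + s)⁻¹ - (a + s)⁻¹) s :=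
  (((hasDerivAt_id s).const_add b).log hb.ne').sub (((hasDerivAt_id s).const_add a).log ha.ne')
    |>.congr_deriv (by simp)

lemma integrableOn_inv_add_sub_inv_add {a b : ℝ} (ha : 0 < a) (hb : 0 < b) :
    IntegrableOn (fun s => (b + s)⁻¹ - (a + s)⁻¹) (Ioi 0) := by
  wlog hba : b ≤ a generalizing a b
  · simpa only [Pi.neg_def, neg_sub] using (this hb ha (le_of_not_ge hba)).neg
  exact integrableOn_Ioi_deriv_of_nonneg'
    (fun s (hs : 0 ≤ s) => hasDerivAt_log_add_sub_log_add (by linarith) (by linarith))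
    (fun s (hs : 0 < s) => sub_nonneg.2 (inv_anti₀ (by linarith) (by linarith)))
    (tendsto_log_add_sub_log_add a b)

lemma integral_inv_add_sub_inv_add {a b : ℝ} (ha : 0 < a) (hb : 0 < b) :
    ∫ s in Ioi 0, ((b + s)⁻¹ - (a + s)⁻¹) = log a - log b := by
  rw [integral_Ioi_of_hasDerivAt_of_tendsto'
    (fun s (hs : 0 ≤ s) => hasDerivAt_log_add_sub_log_add (by linarith) (by linarith))
    (integrableOn_inv_add_sub_inv_add ha hb) (tendsto_log_add_sub_log_add a b)]
  simp

end Real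

section Resolvent

variable {A : Type*} [Ring A] [StarRing A] [TopologicalSpace A] [Algebra ℝ A]
  [ContinuousFunctionalCalculus ℝ A IsSelfAdjoint] {a b : A} {s : ℝ}

lemma cfc_inv_add_eq_inverse (hs : ∀ x ∈ spectrum ℝ a, x + s ≠ 0)
    (ha : IsSelfAdjoint a := by cfc_tac) :
    cfc (fun x => (x + s)⁻¹) a = Ring.inverse (a + algebraMap ℝ A s) := by
  rw [cfc_inv (· + s) a hs, cfc_add_const s (fun x => x) a, cfc_id' ℝ a]

lemma isUnit_add_algebraMap (hs : ∀ x ∈ spectrum ℝ a, x + s ≠ 0)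
    (ha : IsSelfAdjoint a := by cfc_tac) : IsUnit (a + algebraMap ℝ A s) := by
  have := (isUnit_cfc_iff (· + s) a).2 hs
  rwa [cfc_add_const s (fun x => x) a, cfc_id' ℝ a] at this

lemma cfc_inv_add_sub_cfc_inv_add (hsa : ∀ x ∈ spectrum ℝ a, x + s ≠ 0)
    (hsb : ∀ x ∈ spectrum ℝ b, x + s ≠ 0) (ha : IsSelfAdjoint a := by cfc_tac)
    (hb : IsSelfAdjoint b := by cfc_tac) :
    cfc (fun x => (x + s)⁻¹) a - cfc (fun x => (x + s)⁻¹) b =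
      cfc (fun x => (x + s)⁻¹) a * (b - a) * cfc (fun x => (x + s)⁻¹) b := by
  rw [cfc_inv_add_eq_inverse hsa, cfc_inv_add_eq_inverse hsb, Ring.inverse_sub_inverse
    (iff_of_true (isUnit_add_algebraMap hsa) (isUnit_add_algebraMap hsb)), add_sub_add_right_eq_sub]

end Resolvent

namespace Matrix

variable {n : Type*} [Fintype n] [DecidableEq n]

open scoped MatrixOrder in
lemma PosDef.pos_of_mem_spectrum {A : Matrix n n ℂ} (hA : A.PosDef) {x : ℝ}
    (hx : x ∈ spectrum ℝ A) : 0 < x :=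
  hA.isStrictlyPositive.spectrum_pos hx

lemma norm_apply_le_l2_opNorm {m 𝕜 : Type*} [Fintype m] [RCLike 𝕜] (M : Matrix m n 𝕜)
    (i : m) (j : n) : ‖M i j‖ ≤ ‖M‖ :=
  calc ‖M i j‖ = ‖(EuclideanSpace.equiv m 𝕜).symm (M *ᵥ Pi.single j 1) i‖ := by simp
    _ ≤ ‖(EuclideanSpace.equiv m 𝕜).symm (M *ᵥ Pi.single j 1)‖ := PiLp.norm_apply_le _ _
    _ ≤ ‖M‖ := by simpa using M.l2_opNorm_mulVec (EuclideanSpace.single j 1)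

lemma IsHermitian.norm_trace_mul_le {X : Matrix n n ℂ} (hX : X.IsHermitian) (M : Matrix n n ℂ) :
    ‖(X * M).trace‖ ≤ (∑ i, |hX.eigenvalues i|) * ‖M‖ := by
  set U : Matrix n n ℂ := (hX.eigenvectorUnitary : Matrix n n ℂ)
  have hU : U ∈ unitary (Matrix n n ℂ) := hX.eigenvectorUnitary.2
  have hXM : (X * M).trace = ∑ i, (hX.eigenvalues i : ℂ) * (star U * M * U) i i := by
    conv_lhs => rw [hX.spectral_theorem, Unitary.conjStarAlgAut_apply]
    rw [show U * diagonal (RCLike.ofReal ∘ hX.eigenvalues) * star U * M =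
      U * (diagonal (RCLike.ofReal ∘ hX.eigenvalues) * (star U * M)) by
        simp only [Matrix.mul_assoc], trace_mul_comm]
    simp [trace, diagonal_mul, Matrix.mul_assoc]
  have hUMU : ‖star U * M * U‖ = ‖M‖ := by
    rw [CStarRing.norm_mul_mem_unitary _ hU,
      CStarRing.norm_mem_unitary_mul _ (Unitary.star_mem hU)]
  rw [hXM, Finset.sum_mul]
  refine (norm_sum_le _ _).trans (Finset.sum_le_sum fun i _ => ?_)
  rw [norm_mul, Complex.norm_real, Real.norm_eq_abs, ← hUMU]
  exact mul_le_mul_of_nonneg_left (norm_apply_le_l2_opNorm _ _ _) (abs_nonneg _)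

lemma IsHermitian.trace_cfc {A : Matrix n n ℂ} (hA : A.IsHermitian) (f : ℝ → ℝ) :
    (cfc f A).trace = ∑ i, (f (hA.eigenvalues i) : ℂ) := by
  rw [hA.cfc_eq, IsHermitian.cfc, Unitary.conjStarAlgAut_apply, trace_mul_cycle,
    Unitary.coe_star_mul_self, one_mul, trace_diagonal]
  rfl

lemma IsHermitian.trace_cfc_mul_cfc {A B : Matrix n n ℂ} (hA : A.IsHermitian) (hB : B.IsHermitian)
    (f g : ℝ → ℝ) :
    (cfc f A * cfc g B).trace = ∑ i, ∑ j, ((f (hA.eigenvalues i) * g (hB.eigenvalues j) *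
      ‖⟪hB.eigenvectorBasis j, hA.eigenvectorBasis i⟫_ℂ‖ ^ 2 : ℝ) : ℂ) := by
  set U : Matrix n n ℂ := (hA.eigenvectorUnitary : Matrix n n ℂ)
  set V : Matrix n n ℂ := (hB.eigenvectorUnitary : Matrix n n ℂ)
  set F := diagonal (RCLike.ofReal ∘ f ∘ hA.eigenvalues : n → ℂ)
  set G := diagonal (RCLike.ofReal ∘ g ∘ hB.eigenvalues : n → ℂ)
  set P := star U * V
  set Q := star V * U
  have hQ : ∀ i j, Q j i = ⟪hB.eigenvectorBasis j, hA.eigenvectorBasis i⟫_ℂ := fun i j => by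
    simp [Q, mul_apply, EuclideanSpace.inner_eq_star_dotProduct, dotProduct, U, V, mul_comm]
  have hP : ∀ i j, P i j = starRingEnd ℂ (Q j i) := fun i j => by
    simp [P, Q, mul_apply, U, V, mul_comm]
  rw [hA.cfc_eq, hB.cfc_eq, IsHermitian.cfc, IsHermitian.cfc, Unitary.conjStarAlgAut_apply,
    Unitary.conjStarAlgAut_apply,
    show U * F * star U * (V * G * star V) = U * (F * P * G * star V) by
      simp only [P, Matrix.mul_assoc], trace_mul_comm,
    show F * P * G * star V * U = F * P * G * Q by simp only [Q, Matrix.mul_assoc]]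
  simp only [trace, diag, mul_apply, F, G, diagonal_apply, ite_mul, zero_mul, mul_ite, mul_zero,
    Finset.sum_ite_eq', Finset.sum_ite_eq, Finset.mem_univ, if_true]
  refine Finset.sum_congr rfl fun i _ => Finset.sum_congr rfl fun j _ => ?_
  rw [hP, ← hQ]
  push_cast
  rw [← Complex.conj_mul']
  simp only [Function.comp_apply, RCLike.ofReal_eq_complex_ofReal]
  ring

lemma IsHermitian.re_trace_mul_cfc_sub_cfc {A B : Matrix n n ℂ} (hA : A.IsHermitian)
    (hB : B.IsHermitian) (g : ℝ → ℝ) :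
    (A * (cfc g B - cfc g A)).trace.re = ∑ i, ∑ j,
      ‖⟪hB.eigenvectorBasis j, hA.eigenvectorBasis i⟫_ℂ‖ ^ 2 * hA.eigenvalues i *
        (g (hB.eigenvalues j) - g (hA.eigenvalues i)) := by
  have hAB : A * cfc g B = cfc (id : ℝ → ℝ) A * cfc g B := by rw [cfc_id ℝ A]
  have hAA : A * cfc g A = cfc (fun x => x * g x) A * cfc (fun _ => (1 : ℝ)) B := by
    rw [cfc_const_one ℝ B, mul_one, cfc_mul _ _ _ (A.finite_real_spectrum.continuousOn _)
      (A.finite_real_spectrum.continuousOn _), cfc_id' ℝ A]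
  rw [mul_sub, trace_sub, hAB, hAA, hA.trace_cfc_mul_cfc hB, hA.trace_cfc_mul_cfc hB]
  simp only [Complex.sub_re, Complex.re_sum, Complex.ofReal_re, ← Finset.sum_sub_distrib]
  refine Finset.sum_congr rfl fun i _ => Finset.sum_congr rfl fun j _ => ?_
  simp only [id]
  ring

variable {α : Type*} [MeasurableSpace α] {μ : Measure α}

lemma IsHermitian.integrable_re_trace_mul_cfc_sub_cfc {A B : Matrix n n ℂ} (hA : A.IsHermitian)
    (hB : B.IsHermitian) {G : α → ℝ → ℝ}
    (hG : ∀ x ∈ spectrum ℝ A, ∀ y ∈ spectrum ℝ B,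
      Integrable (fun s => G s y - G s x) μ) :
    Integrable (fun s => (A * (cfc (G s) B - cfc (G s) A)).trace.re) μ := by
  simp_rw [hA.re_trace_mul_cfc_sub_cfc hB]
  exact integrable_finsetSum _ fun i _ => integrable_finsetSum _ fun j _ =>
    (hG _ (hA.eigenvalues_mem_spectrum_real i) _ (hB.eigenvalues_mem_spectrum_real j)).const_mul _

lemma IsHermitian.integral_re_trace_mul_cfc_sub_cfc {A B : Matrix n n ℂ} (hA : A.IsHermitian)
    (hB : B.IsHermitian) {G : α → ℝ → ℝ} {g : ℝ → ℝ}
    (hG : ∀ x ∈ spectrum ℝ A, ∀ y ∈ spectrum ℝ B,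
      Integrable (fun s => G s y - G s x) μ)
    (hGg : ∀ x ∈ spectrum ℝ A, ∀ y ∈ spectrum ℝ B,
      ∫ s, (G s y - G s x) ∂μ = g y - g x) :
    ∫ s, (A * (cfc (G s) B - cfc (G s) A)).trace.re ∂μ =
      (A * (cfc g B - cfc g A)).trace.re := by
  simp_rw [hA.re_trace_mul_cfc_sub_cfc hB]
  rw [integral_finsetSum _ fun i _ => integrable_finsetSum _ fun j _ =>
    (hG _ (hA.eigenvalues_mem_spectrum_real i) _ (hB.eigenvalues_mem_spectrum_real j)).const_mul _]
  refine Finset.sum_congr rfl fun i _ => ?_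
  rw [integral_finsetSum _ fun j _ =>
    (hG _ (hA.eigenvalues_mem_spectrum_real i) _ (hB.eigenvalues_mem_spectrum_real j)).const_mul _]
  refine Finset.sum_congr rfl fun j _ => ?_
  rw [integral_const_mul,
    hGg _ (hA.eigenvalues_mem_spectrum_real i) _ (hB.eigenvalues_mem_spectrum_real j)]

end Matrix

lemma matFun_eq_cfc {d : ℕ} {A : Matrix (Fin d) (Fin d) ℂ} (hA : A.IsHermitian)
    (f : ℝ → ℝ) : matFun hA f = cfc f A := by
  rw [hA.cfc_eq, Matrix.IsHermitian.cfc, Unitary.conjStarAlgAut_apply]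
  rfl

lemma traceNorm_eq_re_trace_cfc_sqrt {d : ℕ} (A : Matrix (Fin d) (Fin d) ℂ) :
    traceNorm A = (cfc Real.sqrt (Aᴴ * A)).trace.re := by
  rw [← matFun_eq_cfc (posSemidef_conjTranspose_mul_self A).1]
  rfl

lemma traceNorm_nonneg {d : ℕ} (A : Matrix (Fin d) (Fin d) ℂ) : 0 ≤ traceNorm A := by
  rw [traceNorm_eq_re_trace_cfc_sqrt, (posSemidef_conjTranspose_mul_self A).1.trace_cfc]
  simp only [Complex.re_sum, Complex.ofReal_re]
  positivity

lemma Matrix.IsHermitian.traceNorm_eq_sum_abs_eigenvalues {d : ℕ} {A : Matrix (Fin d) (Fin d) ℂ}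
    (hA : A.IsHermitian) : traceNorm A = ∑ i, |hA.eigenvalues i| := by
  rw [traceNorm_eq_re_trace_cfc_sqrt, hA.eq, ← sq,
    ← cfc_comp_pow _ _ _ Real.continuous_sqrt.continuousOn,
    cfc_congr fun x _ => Real.sqrt_sq_eq_abs x, hA.trace_cfc]
  simp

lemma relEntropy_eq_re_trace_cfc_neg_log {d : ℕ} {ρ σ : Matrix (Fin d) (Fin d) ℂ}
    (hρ : ρ.IsHermitian) (hσ : σ.IsHermitian) :
    relEntropy hρ hσ = (ρ * (cfc (fun x => -log x) σ - cfc (fun x => -log x) ρ)).trace.re := by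
  rw [relEntropy, matFun_eq_cfc, matFun_eq_cfc, cfc_neg, cfc_neg, neg_sub_neg]

noncomputable def relEntropyIntegrand {n : Type*} [Fintype n] [DecidableEq n]
    (ρ σ : Matrix n n ℂ) (s : ℝ) : ℝ :=
  (ρ * (cfc (fun x => (x + s)⁻¹) σ - cfc (fun x => (x + s)⁻¹) ρ)).trace.re

section RelEntropyIntegrand

variable {n : Type*} [Fintype n] [DecidableEq n] {ρ σ : Matrix n n ℂ}

lemma integrableOn_relEntropyIntegrand (hρ : ρ.PosDef) (hσ : σ.PosDef) :
    IntegrableOn (relEntropyIntegrand ρ σ) (Ioi 0) :=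
  hρ.1.integrable_re_trace_mul_cfc_sub_cfc hσ.1 fun _ hx _ hy =>
    integrableOn_inv_add_sub_inv_add (hρ.pos_of_mem_spectrum hx) (hσ.pos_of_mem_spectrum hy)

end RelEntropyIntegrand

section

variable {d : ℕ} {ρ σ : Matrix (Fin d) (Fin d) ℂ}

lemma relEntropy_eq_integral_relEntropyIntegrand (hρ : ρ.PosDef) (hσ : σ.PosDef) :
    relEntropy hρ.1 hσ.1 = ∫ s in Ioi 0, relEntropyIntegrand ρ σ s := by
  rw [relEntropy_eq_re_trace_cfc_neg_log, ← hρ.1.integral_re_trace_mul_cfc_sub_cfc hσ.1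
    (G := fun s x => (x + s)⁻¹)
    (fun _ hx _ hy => integrableOn_inv_add_sub_inv_add (hρ.pos_of_mem_spectrum hx)
      (hσ.pos_of_mem_spectrum hy))
    (fun _ hx _ hy => by
      rw [integral_inv_add_sub_inv_add (hρ.pos_of_mem_spectrum hx) (hσ.pos_of_mem_spectrum hy)]
      ring)]
  rfl

lemma relEntropyIntegrand_le (hρ : ρ.IsHermitian) (hσ : σ.IsHermitian) {s : ℝ}
    (hsρ : ∀ x ∈ spectrum ℝ ρ, x + s ≠ 0) (hsσ : ∀ x ∈ spectrum ℝ σ, x + s ≠ 0) :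
    relEntropyIntegrand ρ σ s ≤ traceNorm (ρ - σ) * ‖cfc (fun x => x / (x + s)) ρ‖ *
      ‖cfc (fun x => (x + s)⁻¹) σ‖ := by
  set Rρ := cfc (fun x => (x + s)⁻¹) ρ
  set Rσ := cfc (fun x => (x + s)⁻¹) σ
  have hX : (ρ - σ).IsHermitian := hρ.sub hσ
  have hRρ : Rρ * ρ = cfc (fun x => x / (x + s)) ρ := by
    rw [cfc_congr fun x _ => div_eq_inv_mul x (x + s),
      cfc_mul _ _ _ (ρ.finite_real_spectrum.continuousOn _)
        (ρ.finite_real_spectrum.continuousOn _), cfc_id' ℝ ρ]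
  calc relEntropyIntegrand ρ σ s = ((ρ - σ) * (Rρ * ρ * Rσ)).trace.re := by
        rw [relEntropyIntegrand, cfc_inv_add_sub_cfc_inv_add hsσ hsρ,
          show ρ * (Rσ * (ρ - σ) * Rρ) = ρ * Rσ * ((ρ - σ) * Rρ) by
            simp only [Matrix.mul_assoc],
          Matrix.trace_mul_comm]
        simp only [Matrix.mul_assoc]
    _ ≤ traceNorm (ρ - σ) * ‖Rρ * ρ * Rσ‖ := by
        rw [hX.traceNorm_eq_sum_abs_eigenvalues]
        exact (Complex.re_le_norm _).trans (hX.norm_trace_mul_le _)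
    _ ≤ traceNorm (ρ - σ) * (‖Rρ * ρ‖ * ‖Rσ‖) :=
        mul_le_mul_of_nonneg_left (norm_mul_le _ _) (traceNorm_nonneg _)
    _ = traceNorm (ρ - σ) * ‖cfc (fun x => x / (x + s)) ρ‖ * ‖Rσ‖ := by
        rw [hRρ, mul_assoc]

lemma relEntropyIntegrand_le_of_isLeast (hρ : ρ.PosDef) (hσ : σ.PosDef) {lρ aρ aσ s : ℝ}
    (hl : IsGreatest (spectrum ℝ ρ) lρ)
    (haρ : IsLeast (spectrum ℝ ρ) aρ) (haσ : IsLeast (spectrum ℝ σ) aσ) (hs : 0 ≤ s) :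
    relEntropyIntegrand ρ σ s ≤ traceNorm (ρ - σ) * (lρ / (aρ + s)) * (aσ + s)⁻¹ := by
  have hρ₀ : ∀ x ∈ spectrum ℝ ρ, 0 < x := fun _ hx => hρ.pos_of_mem_spectrum hx
  have hσ₀ : ∀ x ∈ spectrum ℝ σ, 0 < x := fun _ hx => hσ.pos_of_mem_spectrum hx
  have haρ₀ := hρ₀ _ haρ.1
  have haσ₀ := hσ₀ _ haσ.1
  have hlρ₀ := hρ₀ _ hl.1
  refine (relEntropyIntegrand_le hρ.1 hσ.1
    (fun x hx => (add_pos_of_pos_of_nonneg (hρ₀ x hx) hs).ne')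
    (fun x hx => (add_pos_of_pos_of_nonneg (hσ₀ x hx) hs).ne')).trans ?_
  have hρs : ‖cfc (fun x => x / (x + s)) ρ‖ ≤ lρ / (aρ + s) :=
    norm_cfc_le (by positivity) fun x hx => by
      have hx₀ := hρ₀ x hx
      rw [Real.norm_of_nonneg (by positivity)]
      exact div_le_div₀ hlρ₀.le (hl.2 hx) (by positivity) (by linarith [haρ.2 hx])
  have hσs : ‖cfc (fun x => (x + s)⁻¹) σ‖ ≤ (aσ + s)⁻¹ :=
    norm_cfc_le (by positivity) fun x hx => by
      have hx₀ := hσ₀ x hx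
      rw [Real.norm_of_nonneg (by positivity)]
      exact inv_anti₀ (by positivity) (by linarith [haσ.2 hx])
  have := traceNorm_nonneg (ρ - σ)
  gcongr

end

theorem relEntropy_le_general (d : ℕ)
    (ρ σ : Matrix (Fin d) (Fin d) ℂ) (hρ : ρ.PosDef) (hσ : σ.PosDef)
    (lρ aρ aσ : ℝ)
    (hl : IsGreatest (Set.range hρ.1.eigenvalues) lρ)
    (haρ : IsLeast (Set.range hρ.1.eigenvalues) aρ)
    (haσ : IsLeast (Set.range hσ.1.eigenvalues) aσ)
    (hne : aρ ≠ aσ) :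
    relEntropy hρ.1 hσ.1 ≤
      traceNorm (ρ - σ) * lρ * ((Real.log aρ - Real.log aσ) / (aρ - aσ)) := by
  rw [← hρ.1.spectrum_real_eq_range_eigenvalues] at hl haρ
  rw [← hσ.1.spectrum_real_eq_range_eigenvalues] at haσ
  have haρ₀ : 0 < aρ := hρ.pos_of_mem_spectrum haρ.1
  have haσ₀ : 0 < aσ := hσ.pos_of_mem_spectrum haσ.1
  have hbound : ∀ s ∈ Ioi (0 : ℝ), relEntropyIntegrand ρ σ s ≤
      traceNorm (ρ - σ) * lρ * (((aσ + s)⁻¹ - (aρ + s)⁻¹) / (aρ - aσ)) := fun s hs => by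
    have haρs : aρ + s ≠ 0 := by linarith [mem_Ioi.1 hs]
    have haσs : aσ + s ≠ 0 := by linarith [mem_Ioi.1 hs]
    refine (relEntropyIntegrand_le_of_isLeast hρ hσ hl haρ haσ (le_of_lt hs)).trans_eq ?_
    field_simp [haρs, haσs, sub_ne_zero.2 hne]
    ring
  rw [relEntropy_eq_integral_relEntropyIntegrand hρ hσ, ← integral_inv_add_sub_inv_add haρ₀ haσ₀,
    ← integral_div, ← integral_const_mul]
  exact setIntegral_mono_on (integrableOn_relEntropyIntegrand hρ hσ)
    (((integrableOn_inv_add_sub_inv_add haρ₀ haσ₀).div_const _).const_mul _) measurableSet_Ioi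
    hbound

/-- upper continuity bound on the Umegaki relative entropy. -/
theorem relEntropy_le (d : ℕ)
    (ρ σ : Matrix (Fin d) (Fin d) ℂ) (hρ : ρ.PosDef) (hσ : σ.PosDef)
    (hρtr : ρ.trace = 1) (hσtr : σ.trace = 1)
    (lρ aρ aσ : ℝ)
    (hl : IsGreatest (Set.range hρ.1.eigenvalues) lρ)
    (haρ : IsLeast (Set.range hρ.1.eigenvalues) aρ)
    (haσ : IsLeast (Set.range hσ.1.eigenvalues) aσ)
    (hne : aρ ≠ aσ) :
    relEntropy hρ.1 hσ.1 ≤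
      traceNorm (ρ - σ) * lρ * ((Real.log aρ - Real.log aσ) / (aρ - aσ)) :=
  relEntropy_le_general d ρ σ hρ hσ lρ aρ aσ hl haρ haσ hne
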